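/- With C_k the discrete Cantor set of base M with alphabet A and N = M^k, define r_k = ‖1_{C_k} F_N 1_{C_k}‖ (operator norm on ℂ^N). Then for all k₁, k₂ ≥ 1, r_{k₁+k₂} ≤ r_{k₁}·r_{k₂}. -/

import Mathlib

open scoped Matrix

/-- The unitary discrete Fourier transform matrix
`(F_N)_{jℓ} = N^{-1/2} exp(-2πi jℓ/N)`. -/
noncomputable def dftMat (N : ℕ) : Matrix (Fin N) (Fin N) ℂ :=
  Matrix.of fun j ℓ => ((N : ℂ) ^ (-(1/2 : ℂ))) *
    Complex.exp (-2 * Real.pi * Complex.I * ((j : ℕ) : ℂ) * ((ℓ : ℕ) : ℂ) / (N : ℂ))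

open scoped Classical in
/-- The diagonal matrix of the coordinate projection onto indices in `S`. -/
noncomputable def projMat {N : ℕ} (S : Set ℕ) : Matrix (Fin N) (Fin N) ℂ :=
  Matrix.of fun j ℓ => if j = ℓ ∧ (j : ℕ) ∈ S then 1 else 0

/-- The discrete Cantor set: numbers all of whose base-`M` digits in positions `< k`
lie in the alphabet `A`. Restricted to `{0,…,M^k-1}` this is
`C_k = {a₀ + a₁M + ⋯ + a_{k-1}M^{k-1} : a_j ∈ A}`. -/
def cantorDigits (M k : ℕ) (A : Finset ℕ) : Set ℕ :=
  {n | ∀ i < k, (n / M ^ i) % M ∈ A}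

/-- The operator `1_{C_k} F_N 1_{C_k}` on `ℂ^N`, `N = M^k`, with the Euclidean norm. -/
noncomputable def cantorOp (M k : ℕ) (A : Finset ℕ) :
    EuclideanSpace ℂ (Fin (M ^ k)) →L[ℂ] EuclideanSpace ℂ (Fin (M ^ k)) :=
  LinearMap.toContinuousLinearMap
    (Matrix.toEuclideanLin
      (projMat (cantorDigits M k A) * dftMat (M ^ k) * projMat (cantorDigits M k A)))

/-- `r_k = ‖1_{C_k} F_N 1_{C_k}‖`, the operator norm on `ℂ^N`, `N = M^k`. -/
noncomputable def rk (M : ℕ) (A : Finset ℕ) (k : ℕ) : ℝ := ‖cantorOp M k A‖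

/-!
Cooley–Tukey factorisation. Write row and column indices of `F_{M^(k₁+k₂)}` as
`j = j₂ + M^k₂ j₁` and `ℓ = ℓ₁ + M^k₁ ℓ₂`. Then the entry factors as
`(F_{M^k₁})_{j₁ℓ₁} · ω^{j₂ℓ₁} · (F_{M^k₂})_{j₂ℓ₂}` with a unimodular twiddle factor `ω^{j₂ℓ₁}`,
and membership in `C_{k₁+k₂}` splits digitwise into membership of the two halves in `C_{k₁}`
and `C_{k₂}`. So, after reindexing, `T_{k₁+k₂} = 1_C F 1_C` is `(T_{k₁} ⊗ 1) D (1 ⊗ T_{k₂})`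
with `D` a diagonal contraction, and its norm is at most `‖T_{k₁}‖ ‖T_{k₂}‖`.
-/

open scoped Matrix.Norms.L2Operator

namespace Matrix

variable {𝕜 : Type*} [RCLike 𝕜] {m n : Type*} [Fintype m] [Fintype n] [DecidableEq n]

theorem sum_norm_sq_mulVec_le_l2_opNorm_sq (T : Matrix m n 𝕜) (x : n → 𝕜) :
    ∑ i, ‖(T *ᵥ x) i‖ ^ 2 ≤ ‖T‖ ^ 2 * ∑ j, ‖x j‖ ^ 2 := by
  have h := T.l2_opNorm_mulVec (WithLp.toLp 2 x)
  have := pow_le_pow_left₀ (norm_nonneg _) h 2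
  simpa [mul_pow, EuclideanSpace.norm_sq_eq] using this

theorem l2_opNorm_le_of_sum_norm_sq_le (T : Matrix m n 𝕜) {r : ℝ} (hr : 0 ≤ r)
    (h : ∀ x : n → 𝕜, ∑ i, ‖(T *ᵥ x) i‖ ^ 2 ≤ r ^ 2 * ∑ j, ‖x j‖ ^ 2) : ‖T‖ ≤ r := by
  refine ContinuousLinearMap.opNorm_le_bound _ hr fun x => ?_
  rw [← sq_le_sq₀ (norm_nonneg _) (by positivity), mul_pow]
  simpa [EuclideanSpace.norm_sq_eq] using h x

variable {ι₁ ι₂ κ₁ κ₂ ι κ : Type*} [Fintype κ₁] [Fintype κ₂] [Fintype κ]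

theorem mulVec_apply_of_apply_eq_mul_mul {T : Matrix ι κ 𝕜} {A : Matrix ι₁ κ₁ 𝕜}
    {B : Matrix ι₂ κ₂ 𝕜} {φ : ι₂ → κ₁ → 𝕜} {eι : ι₁ × ι₂ ≃ ι} {eκ : κ₂ × κ₁ ≃ κ}
    (hT : ∀ j₁ j₂ l₁ l₂, T (eι (j₁, j₂)) (eκ (l₂, l₁)) = A j₁ l₁ * φ j₂ l₁ * B j₂ l₂)
    (x : κ → 𝕜) (j₁ : ι₁) (j₂ : ι₂) :
    (T *ᵥ x) (eι (j₁, j₂)) =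
      (A *ᵥ fun l₁ => φ j₂ l₁ * (B *ᵥ fun l₂ => x (eκ (l₂, l₁))) j₂) j₁ := by
  simp only [mulVec, dotProduct, ← eκ.sum_comp, Fintype.sum_prod_type, hT, Finset.mul_sum]
  rw [Finset.sum_comm]
  simp only [mul_assoc]

variable [Fintype ι₁] [Fintype ι₂] [Fintype ι] [DecidableEq κ₁] [DecidableEq κ₂] [DecidableEq κ]

theorem l2_opNorm_le_mul_of_apply_eq_mul_mul {T : Matrix ι κ 𝕜} {A : Matrix ι₁ κ₁ 𝕜}
    {B : Matrix ι₂ κ₂ 𝕜} {φ : ι₂ → κ₁ → 𝕜} (eι : ι₁ × ι₂ ≃ ι) (eκ : κ₂ × κ₁ ≃ κ)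
    (hφ : ∀ j l, ‖φ j l‖ ≤ 1)
    (hT : ∀ j₁ j₂ l₁ l₂, T (eι (j₁, j₂)) (eκ (l₂, l₁)) = A j₁ l₁ * φ j₂ l₁ * B j₂ l₂) :
    ‖T‖ ≤ ‖A‖ * ‖B‖ := by
  refine T.l2_opNorm_le_of_sum_norm_sq_le (by positivity) fun x => ?_
  set y : κ₁ → κ₂ → 𝕜 := fun l₁ l₂ => x (eκ (l₂, l₁))
  calc ∑ i, ‖(T *ᵥ x) i‖ ^ 2
      = ∑ j₂, ∑ j₁, ‖(A *ᵥ fun l₁ => φ j₂ l₁ * (B *ᵥ y l₁) j₂) j₁‖ ^ 2 := by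
        simp only [← eι.sum_comp, Fintype.sum_prod_type, mulVec_apply_of_apply_eq_mul_mul hT]
        exact Finset.sum_comm
    _ ≤ ∑ j₂, ‖A‖ ^ 2 * ∑ l₁, ‖φ j₂ l₁ * (B *ᵥ y l₁) j₂‖ ^ 2 :=
        Finset.sum_le_sum fun j₂ _ => A.sum_norm_sq_mulVec_le_l2_opNorm_sq _
    _ ≤ ‖A‖ ^ 2 * ∑ l₁, ∑ j₂, ‖(B *ᵥ y l₁) j₂‖ ^ 2 := by
        rw [← Finset.mul_sum, Finset.sum_comm]
        gcongr with l₁ _ j₂ _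
        rw [norm_mul]
        exact mul_le_of_le_one_left (norm_nonneg _) (hφ j₂ l₁)
    _ ≤ ‖A‖ ^ 2 * ∑ l₁, ‖B‖ ^ 2 * ∑ l₂, ‖y l₁ l₂‖ ^ 2 := by
        gcongr with l₁ _
        exact B.sum_norm_sq_mulVec_le_l2_opNorm_sq _
    _ = (‖A‖ * ‖B‖) ^ 2 * ∑ j, ‖x j‖ ^ 2 := by
        simp only [y, ← eκ.sum_comp, Fintype.sum_prod_type, ← Finset.mul_sum]
        rw [Finset.sum_comm]
        ring

end Matrix

section Twiddle

open Complex Real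

noncomputable def twiddle (N j l : ℕ) : ℂ := exp (-2 * π * I * j * l / N)

theorem dftMat_apply (N : ℕ) (j l : Fin N) :
    dftMat N j l = (N : ℂ) ^ (-(1 / 2 : ℂ)) * twiddle N j l := rfl

theorem norm_twiddle (N j l : ℕ) : ‖twiddle N j l‖ = 1 := by
  rw [twiddle, norm_exp]
  simp

theorem twiddle_add_mul {n₁ n₂ : ℕ} (hn₁ : n₁ ≠ 0) (hn₂ : n₂ ≠ 0) (j₁ l₁ j₂ l₂ : ℕ) :
    twiddle (n₁ * n₂) (j₂ + n₂ * j₁) (l₁ + n₁ * l₂) =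
      twiddle n₁ j₁ l₁ * twiddle (n₁ * n₂) j₂ l₁ * twiddle n₂ j₂ l₂ := by
  -- the cross term `j₁ l₂` is an integer, so it contributes a full turn
  have hexp : -2 * π * I * ↑(j₂ + n₂ * j₁) * ↑(l₁ + n₁ * l₂) / ↑(n₁ * n₂) =
      -2 * π * I * j₁ * l₁ / n₁ + -2 * π * I * j₂ * l₁ / ↑(n₁ * n₂) +
        -2 * π * I * j₂ * l₂ / n₂ + (Int.cast (-(j₁ * l₂ : ℤ)) : ℂ) * (2 * π * I) := by
    push_cast
    field_simp
    ring
  rw [twiddle, hexp, Complex.exp_add, exp_int_mul_two_pi_mul_I, mul_one, Complex.exp_add,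
    Complex.exp_add]
  rfl

theorem dftMat_apply_eq_mul {N n₁ n₂ : ℕ} (hN : N = n₁ * n₂) (hn₁ : n₁ ≠ 0) (hn₂ : n₂ ≠ 0)
    (j l : Fin N) (j₁ l₁ : Fin n₁) (j₂ l₂ : Fin n₂)
    (hj : (j : ℕ) = j₂ + n₂ * j₁) (hl : (l : ℕ) = l₁ + n₁ * l₂) :
    dftMat N j l = dftMat n₁ j₁ l₁ * twiddle N j₂ l₁ * dftMat n₂ j₂ l₂ := by
  subst hN
  simp only [dftMat_apply, hj, hl, twiddle_add_mul hn₁ hn₂, Nat.cast_mul,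
    natCast_mul_natCast_cpow]
  ring

end Twiddle

open scoped Classical in
theorem projMat_eq_diagonal {N : ℕ} (S : Set ℕ) :
    (projMat S : Matrix (Fin N) (Fin N) ℂ) =
      Matrix.diagonal fun j : Fin N => if (j : ℕ) ∈ S then 1 else 0 := by
  ext j l
  by_cases h : j = l <;> simp [projMat, h]

open scoped Classical in
theorem projMat_mul_mul_projMat_apply {N : ℕ} (S : Set ℕ) (B : Matrix (Fin N) (Fin N) ℂ)
    (j l : Fin N) :
    (projMat S * B * projMat S : Matrix (Fin N) (Fin N) ℂ) j l =
      if (j : ℕ) ∈ S ∧ (l : ℕ) ∈ S then B j l else 0 := by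
  simp only [projMat_eq_diagonal, Matrix.diagonal_mul, Matrix.mul_diagonal, ite_mul, one_mul,
    zero_mul, mul_ite, mul_one, mul_zero]
  split_ifs <;> simp_all

theorem mem_cantorDigits_add_mul_iff {M : ℕ} (hM : 0 < M) (A : Finset ℕ) {k : ℕ} (k' : ℕ)
    {a : ℕ} (b : ℕ) (ha : a < M ^ k) :
    a + M ^ k * b ∈ cantorDigits M (k + k') A ↔
      a ∈ cantorDigits M k A ∧ b ∈ cantorDigits M k' A := by
  have low : ∀ i < k, (a + M ^ k * b) / M ^ i % M = a / M ^ i % M := by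
    intro i hi
    obtain ⟨d, rfl⟩ := Nat.exists_eq_add_of_lt hi
    rw [show M ^ (i + d + 1) * b = M ^ i * (M ^ d * b * M) by ring,
      Nat.add_mul_div_left _ _ (pow_pos hM i), Nat.add_mul_mod_self_right]
  have high : ∀ i, (a + M ^ k * b) / M ^ (k + i) % M = b / M ^ i % M := by
    intro i
    rw [pow_add, ← Nat.div_div_eq_div_mul, Nat.add_mul_div_left _ _ (pow_pos hM k),
      Nat.div_eq_of_lt ha, zero_add]
  constructor
  · intro h
    exact ⟨fun i hi => low i hi ▸ h i (by omega), fun i hi => high i ▸ h (k + i) (by omega)⟩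
  · rintro ⟨ha, hb⟩ i hi
    rcases lt_or_ge i k with hik | hik
    · exact (low i hik).symm ▸ ha i hik
    · obtain ⟨i, rfl⟩ := Nat.exists_eq_add_of_le hik
      exact (high i).symm ▸ hb i (by omega)

noncomputable def cantorMat (M k : ℕ) (A : Finset ℕ) : Matrix (Fin (M ^ k)) (Fin (M ^ k)) ℂ :=
  projMat (cantorDigits M k A) * dftMat (M ^ k) * projMat (cantorDigits M k A)

theorem rk_eq_l2_opNorm_cantorMat (M : ℕ) (A : Finset ℕ) (k : ℕ) :
    rk M A k = ‖cantorMat M k A‖ := rfl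

theorem cantorMat_apply_eq_mul {M : ℕ} (hM : 0 < M) (A : Finset ℕ) {k₁ k₂ : ℕ}
    (j l : Fin (M ^ (k₁ + k₂))) (j₁ l₁ : Fin (M ^ k₁)) (j₂ l₂ : Fin (M ^ k₂))
    (hj : (j : ℕ) = j₂ + M ^ k₂ * j₁) (hl : (l : ℕ) = l₁ + M ^ k₁ * l₂) :
    cantorMat M (k₁ + k₂) A j l =
      cantorMat M k₁ A j₁ l₁ * twiddle (M ^ (k₁ + k₂)) j₂ l₁ * cantorMat M k₂ A j₂ l₂ := by
  have hj_mem : (j : ℕ) ∈ cantorDigits M (k₁ + k₂) A ↔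
      (j₁ : ℕ) ∈ cantorDigits M k₁ A ∧ (j₂ : ℕ) ∈ cantorDigits M k₂ A := by
    rw [hj, add_comm k₁, mem_cantorDigits_add_mul_iff hM A _ _ j₂.2, and_comm]
  have hl_mem : (l : ℕ) ∈ cantorDigits M (k₁ + k₂) A ↔
      (l₁ : ℕ) ∈ cantorDigits M k₁ A ∧ (l₂ : ℕ) ∈ cantorDigits M k₂ A := by
    rw [hl, mem_cantorDigits_add_mul_iff hM A _ _ l₁.2]
  have hdft := dftMat_apply_eq_mul (pow_add M k₁ k₂) (pow_pos hM k₁).ne' (pow_pos hM k₂).ne'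
    j l j₁ l₁ j₂ l₂ hj hl
  simp only [cantorMat, projMat_mul_mul_projMat_apply, hj_mem, hl_mem, hdft]
  split_ifs <;> simp_all

theorem stmt8 (M : ℕ) (hM : 3 ≤ M) (A : Finset ℕ) (k1 k2 : ℕ) :
    rk M A (k1 + k2) ≤ rk M A k1 * rk M A k2 := by
  have hM₀ : 0 < M := by omega
  let eRow : Fin (M ^ k1) × Fin (M ^ k2) ≃ Fin (M ^ (k1 + k2)) :=
    finProdFinEquiv.trans (finCongr (pow_add M k1 k2).symm)
  let eCol : Fin (M ^ k2) × Fin (M ^ k1) ≃ Fin (M ^ (k1 + k2)) :=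
    finProdFinEquiv.trans (finCongr (by rw [pow_add, mul_comm]))
  simp only [rk_eq_l2_opNorm_cantorMat]
  refine Matrix.l2_opNorm_le_mul_of_apply_eq_mul_mul eRow eCol
    (fun j₂ l₁ => (norm_twiddle _ j₂ l₁).le) fun j₁ j₂ l₁ l₂ =>
      cantorMat_apply_eq_mul hM₀ A _ _ j₁ l₁ j₂ l₂ ?_ ?_ <;> simp [eRow, eCol]
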